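/- The Hasse diagram of the interval-poset associated to a noncrossing tree contains no configuration of the form y → z and y → x with x < y < z; that is, no element y covers (in the reversed sense, is covered by) two elements, one smaller and one larger than y. -/
import Mathlib


/-- Planar binary trees. -/
inductive BT : Type
  | leaf : BT
  | node : BT → BT → BT
deriving DecidableEq

namespace BT

/-- Number of internal vertices. -/
def size : BT → ℕ
  | leaf => 0
  | node l r => l.size + r.size + 1

/-- One left rotation somewhere in the tree (covering relation of the Tamari lattice). -/
inductive Rot : BT → BT → Prop
  | root (a b c : BT) : Rot (node (node a b) c) (node a (node b c))
  | left {l l' : BT} (r : BT) : Rot l l' → Rot (node l r) (node l' r)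
  | right (l : BT) {r r' : BT} : Rot r r' → Rot (node l r) (node l r')

/-- The Tamari order: reflexive transitive closure of left rotations. -/
def tamariLE (S T : BT) : Prop := Relation.ReflTransGen Rot S T

/-- The partial order induced by a binary tree on `{1,…,size}` via in-order labelling:
`rel T i j` iff the vertex labelled `i` lies in the subtree rooted at the vertex labelled `j`. -/
def rel : BT → ℕ → ℕ → Prop
  | leaf, _, _ => False
  | node l r, i, j =>
      (j = l.size + 1 ∧ 1 ≤ i ∧ i ≤ l.size + r.size + 1) ∨
      rel l i j ∨
      (∃ i' j', rel r i' j' ∧ i = i' + l.size + 1 ∧ j = j' + l.size + 1)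

/-- Decreasing relations of a tree: pairs `(c, a)` with `a < c` and `c ◁ a`. -/
def Dec (T : BT) : Set (ℕ × ℕ) := {p | p.2 < p.1 ∧ T.rel p.1 p.2}

/-- Increasing relations of a tree: pairs `(a, c)` with `a < c` and `a ◁ c`. -/
def Inc (T : BT) : Set (ℕ × ℕ) := {p | p.1 < p.2 ∧ T.rel p.1 p.2}

/-- Left/right mirror image of a planar binary tree. -/
def mirror : BT → BT
  | leaf => leaf
  | node l r => node r.mirror l.mirror

/-- In-order label of the root (0 for the empty tree). -/
def rootLabel : BT → ℕ
  | leaf => 0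
  | node l _ => l.size + 1

/-- `rcRel T i j` iff, under in-order labelling, the vertex `j` is the right child of vertex `i`. -/
def rcRel : BT → ℕ → ℕ → Prop
  | leaf, _, _ => False
  | node l r, i, j =>
      (i = l.size + 1 ∧ r ≠ leaf ∧ j = l.size + 1 + r.rootLabel) ∨
      rcRel l i j ∨
      (∃ i' j', rcRel r i' j' ∧ i = i' + l.size + 1 ∧ j = j' + l.size + 1)

/-- `graft T i S` grafts the root of `S` on the `i`-th leaf of `T` (leaves numbered 1,…,size+1
from left to right). -/
def graft : BT → ℕ → BT → BT
  | leaf, _, S => S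
  | node l r, i, S =>
      if i ≤ l.size + 1 then node (l.graft i S) r
      else node l (r.graft (i - (l.size + 1)) S)

end BT

/-- An interval-poset of size `n`: a partial order on `{1,…,n}` (encoded as a relation on `ℕ`
supported and reflexive on `{1,…,n}`) satisfying the two interval-poset conditions. -/
def IsIntervalPoset (n : ℕ) (r : ℕ → ℕ → Prop) : Prop :=
  (∀ a b, r a b → 1 ≤ a ∧ a ≤ n ∧ 1 ≤ b ∧ b ≤ n) ∧
  (∀ a, 1 ≤ a → a ≤ n → r a a) ∧
  (∀ a b c, r a b → r b c → r a c) ∧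
  (∀ a b, r a b → r b a → a = b) ∧
  (∀ a b c, a < b → b < c → r a c → r b c) ∧
  (∀ a b c, a < b → b < c → r c a → r c b)

/-- The Châtel–Pons interval-poset of an interval `[S,T]`: reflexivity together with the
decreasing relations of `S` and the increasing relations of `T`. -/
def ipOf (S T : BT) : ℕ → ℕ → Prop := fun a b =>
  (a = b ∧ 1 ≤ a ∧ a ≤ S.size) ∨ (b < a ∧ S.rel a b) ∨ (a < b ∧ T.rel a b)

/-- `HasseCov r a b`: the relation `a ◁ b` is a cover relation (an edge `a → b` of the
Hasse diagram) of the poset `r`. -/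
def HasseCov (r : ℕ → ℕ → Prop) (a b : ℕ) : Prop :=
  r a b ∧ a ≠ b ∧ ∀ c, r a c → r c b → c = a ∨ c = b

/-- An exceptional interval-poset: the Hasse diagram contains no configuration
`y → x`, `y → z` with `x < y < z`. -/
def IsExceptional (n : ℕ) (r : ℕ → ℕ → Prop) : Prop :=
  IsIntervalPoset n r ∧
  ¬∃ x y z, x < y ∧ y < z ∧ HasseCov r y x ∧ HasseCov r y z

/-- A noncrossing tree in the based regular `(n+1)`-gon, with vertices `0,…,n`:
a spanning tree whose edges pairwise do not cross. Boundary edge `i` (for `1 ≤ i ≤ n`)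
joins vertices `i-1` and `i`; the base joins vertices `0` and `n`. -/
def IsNCTree (n : ℕ) (G : SimpleGraph (Fin (n + 1))) : Prop :=
  G.IsTree ∧
  ∀ a b c d : Fin (n + 1), G.Adj a b → G.Adj c d →
    ¬((a : ℕ) < c ∧ (c : ℕ) < b ∧ (b : ℕ) < d)

/-- Adjacency in a graph on `Fin (n+1)`, read on natural numbers. -/
def adjN (n : ℕ) (G : SimpleGraph (Fin (n + 1))) (a b : ℕ) : Prop :=
  ∃ (ha : a < n + 1) (hb : b < n + 1), G.Adj ⟨a, ha⟩ ⟨b, hb⟩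

/-- `EdgeLabel n G a b i`: the edge of the noncrossing tree `G` joining vertices `a < b`
carries the label `i`, i.e. it separates boundary edge `i` from the base and `i` is either
the edge itself (boundary case) or an open boundary edge. -/
def EdgeLabel (n : ℕ) (G : SimpleGraph (Fin (n + 1))) (a b i : ℕ) : Prop :=
  a < b ∧ b ≤ n ∧ adjN n G a b ∧ a < i ∧ i ≤ b ∧ (b = a + 1 ∨ ¬adjN n G (i - 1) i)

/-- The relation `◁_T` induced by a noncrossing tree: `i ◁ j` iff the edge labelled `i`
is separated from the base by the edge labelled `j` (plus reflexivity on `{1,…,n}`). -/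
def ncRel (n : ℕ) (G : SimpleGraph (Fin (n + 1))) : ℕ → ℕ → Prop := fun i j =>
  (i = j ∧ 1 ≤ i ∧ i ≤ n) ∨
  ∃ a b c d, EdgeLabel n G a b i ∧ EdgeLabel n G c d j ∧ c ≤ a ∧ b ≤ d ∧ ¬(a = c ∧ b = d)

/-- The graph `T_P` associated to an interval-poset `P`: for each `v`, an edge from the left
side of `min {x | x ◁ v}` (vertex `min − 1`) to the right side of `max {x | x ◁ v}`. -/
noncomputable def graphOf (n : ℕ) (r : ℕ → ℕ → Prop) : SimpleGraph (Fin (n + 1)) :=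
  SimpleGraph.fromRel (fun a b =>
    ∃ v, 1 ≤ v ∧ v ≤ n ∧ (a : ℕ) + 1 = sInf {x | r x v} ∧ (b : ℕ) = sSup {x | r x v})

/-- The partition `π_T` of a binary tree, as an equivalence-type relation: the finest
partition in which every vertex and its right child lie in the same block. -/
def sameBlock (T : BT) : ℕ → ℕ → Prop :=
  Relation.EqvGen (fun a b => T.rcRel a b ∨ T.rcRel b a)

/-- A relation (thought of as "same block of a partition") is noncrossing. -/
def IsNoncrossingRel (r : ℕ → ℕ → Prop) : Prop :=
  ¬∃ i j k l, i < j ∧ j < k ∧ k < l ∧ r i k ∧ r j l ∧ ¬r i j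

/-- The partition `π_T` of `{1,…,n}` associated to a binary tree, restricted to its support. -/
def partOf (T : BT) : ℕ → ℕ → Prop := fun a b =>
  sameBlock T a b ∧ 1 ≤ a ∧ a ≤ T.size ∧ 1 ≤ b ∧ b ≤ T.size

/-- A noncrossing partition of `{1,…,n}`, encoded as its "same block" equivalence relation. -/
def NCPartition (n : ℕ) (r : ℕ → ℕ → Prop) : Prop :=
  (∀ a b, r a b → 1 ≤ a ∧ a ≤ n ∧ 1 ≤ b ∧ b ≤ n) ∧
  (∀ a, 1 ≤ a → a ≤ n → r a a) ∧
  (∀ a b, r a b → r b a) ∧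
  (∀ a b c, r a b → r b c → r a c) ∧
  IsNoncrossingRel r

/-- `SubtreeAt S i j A`: `A` is a (nonempty) subtree of `S` rooted at an internal vertex,
whose leaves are the leaves `i,…,j` of `S`. -/
def SubtreeAt : BT → ℕ → ℕ → BT → Prop
  | .leaf, _, _, _ => False
  | .node l r, i, j, A =>
      (A = .node l r ∧ i = 1 ∧ j = (BT.node l r).size + 1) ∨
      SubtreeAt l i j A ∨
      (∃ i' j', SubtreeAt r i' j' A ∧ i = i' + l.size + 1 ∧ j = j' + l.size + 1)

/-- A new interval of `Tam n`: an interval that cannot be obtained as the grafting of two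
intervals of smaller sizes. -/
def IsNewInterval (n : ℕ) (S T : BT) : Prop :=
  S.size = n ∧ T.size = n ∧ BT.tamariLE S T ∧
  ¬∃ (S1 T1 S2 T2 : BT) (i : ℕ),
      S1.size = T1.size ∧ S2.size = T2.size ∧ S1.size < n ∧ S2.size < n ∧
      BT.tamariLE S1 T1 ∧ BT.tamariLE S2 T2 ∧ 1 ≤ i ∧ i ≤ S1.size + 1 ∧
      S = S1.graft i S2 ∧ T = T1.graft i T2

/-- The rise of a relation of size `n`: keep the decreasing relations, shift the increasing
relations by `+1`, on the ground set `{1,…,n+1}`. -/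
def riseRel (n : ℕ) (r : ℕ → ℕ → Prop) : ℕ → ℕ → Prop := fun a b =>
  (a = b ∧ 1 ≤ a ∧ a ≤ n + 1) ∨ (b < a ∧ r a b) ∨ (a < b ∧ 2 ≤ a ∧ r (a - 1) (b - 1))

/-- A relation is modern: no configuration `x ◁ y` and `z ◁ y` with `x < y < z`. -/
def ModernRel (r : ℕ → ℕ → Prop) : Prop :=
  ¬∃ x y z, x < y ∧ y < z ∧ r x y ∧ r z y

/-- A new interval-poset of size `m`: no increasing relation starting at `1`, no decreasing
relation starting at `m`, and no pair of relations `i+1 ◁ j+1` and `j ◁ i` with `i < j`. -/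
def NewIP (m : ℕ) (r : ℕ → ℕ → Prop) : Prop :=
  IsIntervalPoset m r ∧
  (¬∃ y, 1 < y ∧ r 1 y) ∧
  (¬∃ x, x < m ∧ r m x) ∧
  ¬∃ i j, i < j ∧ r (i + 1) (j + 1) ∧ r j i

/-- The fall of a relation of size `m`: keep the decreasing relations, shift the increasing
relations by `−1`, on the ground set `{1,…,m−1}`. -/
def fallRel (m : ℕ) (r : ℕ → ℕ → Prop) : ℕ → ℕ → Prop := fun a b =>
  (a = b ∧ 1 ≤ a ∧ a ≤ m - 1) ∨ (b < a ∧ r a b) ∨ (a < b ∧ r (a + 1) (b + 1))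

/-- Iterated rise: `riseIter n r k` is the `k`-th rise of a relation of size `n`. -/
def riseIter (n : ℕ) (r : ℕ → ℕ → Prop) : ℕ → (ℕ → ℕ → Prop)
  | 0 => r
  | k + 1 => riseRel (n + k) (riseIter n r k)

/-- An infinitely modern relation: no configuration `w ◁ x` and `z ◁ y` with `w < x < y < z`. -/
def InfModernRel (r : ℕ → ℕ → Prop) : Prop :=
  ¬∃ w x y z, w < x ∧ x < y ∧ y < z ∧ r w x ∧ r z y

open Classical in
/-- `irStat n r`: the smallest `k` with an increasing relation `k ◁ k+1`, and `n` if none. -/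
noncomputable def irStat (n : ℕ) (r : ℕ → ℕ → Prop) : ℕ :=
  if ∃ k, r k (k + 1) then sInf {k | r k (k + 1)} else n

open Classical in
/-- `drStat n r`: the largest `i` with a decreasing relation `i ◁ i−1`, and `1` if none. -/
noncomputable def drStat (n : ℕ) (r : ℕ → ℕ → Prop) : ℕ :=
  if ∃ i, 2 ≤ i ∧ r i (i - 1) then sSup {i | 2 ≤ i ∧ r i (i - 1)} else 1
/-- Two edges of a noncrossing tree spanning a common gap are nested. -/
lemma nested_of_span (n : ℕ) (G : SimpleGraph (Fin (n + 1)))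
    (hnc : ∀ a b c d : Fin (n + 1), G.Adj a b → G.Adj c d →
      ¬((a : ℕ) < c ∧ (c : ℕ) < b ∧ (b : ℕ) < d))
    {a b c d x : ℕ} (hab : adjN n G a b) (hcd : adjN n G c d)
    (h1 : a < x) (h2 : x ≤ b) (h3 : c < x) (h4 : x ≤ d) :
    (a ≤ c ∧ d ≤ b) ∨ (c ≤ a ∧ b ≤ d) := by
  obtain ⟨ha, hb, hAB⟩ := hab
  obtain ⟨hc, hd, hCD⟩ := hcd
  by_contra h
  push_neg at h
  obtain ⟨h5, h6⟩ := h
  rcases lt_trichotomy a c with hac | hac | hac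
  · exact hnc ⟨a, ha⟩ ⟨b, hb⟩ ⟨c, hc⟩ ⟨d, hd⟩ hAB hCD
      (by simp only [Fin.val_mk]; exact ⟨hac, by omega, h5 hac.le⟩)
  · have := h5 hac.le
    have := h6 hac.ge
    omega
  · exact hnc ⟨c, hc⟩ ⟨d, hd⟩ ⟨a, ha⟩ ⟨b, hb⟩ hCD hAB
      (by simp only [Fin.val_mk]; exact ⟨hac, by omega, h6 hac.le⟩)

/-- A walk from a vertex satisfying `P` to one not satisfying `P` crosses the boundary. -/
lemma walk_boundary {V : Type*} {G : SimpleGraph V} (P : V → Prop) :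
    ∀ {u v : V}, G.Walk u v → P u → ¬P v → ∃ s t, G.Adj s t ∧ P s ∧ ¬P t := by
  intro u v w
  induction w with
  | nil => intro h1 h2; exact absurd h1 h2
  | @cons u u' v h p ih =>
    intro h1 h2
    by_cases hm : P u'
    · exact ih hm h2
    · exact ⟨u, u', h, h1, hm⟩

/-- the Hasse diagram of the interval-poset of a noncrossing tree contains no
configuration `y → x` and `y → z` with `x < y < z`. -/
theorem ncTree_rel_exceptional_config (n : ℕ) (G : SimpleGraph (Fin (n + 1)))
    (hG : IsNCTree n G) :
    ¬∃ x y z, x < y ∧ y < z ∧ HasseCov (ncRel n G) y x ∧ HasseCov (ncRel n G) y z := by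
  obtain ⟨htree, hnc⟩ := hG
  rintro ⟨x, y, z, hxy, hyz, ⟨hryx, hyx, hcovx⟩, ⟨hryz, hyz', hcovz⟩⟩
  have hryx0 := hryx
  have hryz0 := hryz
  -- extract the nested edge pairs
  rcases hryx with hrefl | ⟨a, b, c, d, hE1, hE2, hca, hbd, hne⟩
  · exact hyx hrefl.1
  rcases hryz with hrefl | ⟨a', b', c', d', hE1', hE2', hca', hbd', hne'⟩
  · exact hyz' hrefl.1
  obtain ⟨hab, hbn, hadj1, hay, hyb, -⟩ := id hE1
  obtain ⟨hcd, hdn, hadj2, hcx, hxd, hlx⟩ := id hE2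
  obtain ⟨hab', hbn', hadj1', hay', hyb', -⟩ := id hE1'
  obtain ⟨hcd', hdn', hadj2', hcz, hzd', hlz⟩ := id hE2'
  -- both outer edges span the gap `y`, hence they are nested; strict nesting breaks a cover
  have hkey : c' = c ∧ d' = d := by
    rcases nested_of_span n G hnc hadj2 hadj2' (show c < y by omega) (by omega)
        (by omega) (by omega) with ⟨h1, h2⟩ | ⟨h1, h2⟩
    · -- (c', d') ⊆ (c, d)
      by_contra hne2
      have hzx : ncRel n G z x :=
        Or.inr ⟨c', d', c, d, hE2', hE2, h1, h2, fun h => hne2 ⟨h.1, h.2⟩⟩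
      have := hcovx z hryz0 hzx
      omega
    · -- (c, d) ⊆ (c', d')
      by_cases hne2 : c = c' ∧ d = d'
      · exact ⟨hne2.1.symm, hne2.2.symm⟩
      · have hxz : ncRel n G x z :=
          Or.inr ⟨c, d, c', d', hE2, hE2', h1, h2, hne2⟩
        have := hcovz x hryx0 hxz
        omega
  obtain ⟨he1, he2⟩ := hkey
  rw [he1, he2] at hE2' hlz
  -- now one edge (c, d) carries both labels x and z, and strictly contains (a, b)
  have hcd2 : c + 2 ≤ d := by
    rcases hne with h
    omega
  have hnadjx : ¬adjN n G (x - 1) x := by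
    rcases hlx with h | h
    · omega
    · exact h
  have hnadjz : ¬adjN n G (z - 1) z := by
    rcases hlz with h | h
    · omega
    · exact h
  -- connectivity: a walk from vertex x to vertex c must leave {x, ..., z-1}
  have hxn : x < n + 1 := by omega
  have hcn : c < n + 1 := by omega
  obtain ⟨w⟩ := htree.isConnected.preconnected ⟨x, hxn⟩ ⟨c, hcn⟩
  obtain ⟨s, t, hst, hPs, hPt⟩ :=
    walk_boundary (fun v : Fin (n + 1) => x ≤ (v : ℕ) ∧ (v : ℕ) < z) w
      (by simp only [Fin.val_mk]; omega) (by simp only [Fin.val_mk]; omega)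
  set u : ℕ := (s : ℕ) with hu
  set v : ℕ := (t : ℕ) with hv
  have huv : adjN n G u v := ⟨s.isLt, t.isLt, by simpa using hst⟩
  have hvu : adjN n G v u := ⟨t.isLt, s.isLt, by simpa using hst.symm⟩
  have hun : u ≤ n := by omega
  have hvn : v ≤ n := by omega
  have hPs' : x ≤ u ∧ u < z := hPs
  have hvcase : v < x ∨ z ≤ v := by
    by_contra h
    push_neg at h
    exact hPt ⟨h.1, h.2⟩
  rcases hvcase with hvx | hzv
  · -- the crossing edge spans gap x, strictly inside (c, d): gives ncRel x z
    rcases nested_of_span n G hnc hvu hadj2 (show v < x from hvx) (by omega)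
        hcx hxd with ⟨h1, h2⟩ | ⟨h1, h2⟩
    · omega
    · have hExvu : EdgeLabel n G v u x :=
        ⟨by omega, hun, hvu, hvx, by omega, Or.inr hnadjx⟩
      have hxz : ncRel n G x z :=
        Or.inr ⟨v, u, c, d, hExvu, hE2', h1, h2, by omega⟩
      have := hcovz x hryx0 hxz
      omega
  · -- the crossing edge spans gap z, strictly inside (c, d): gives ncRel z x
    rcases nested_of_span n G hnc huv hadj2 (show u < z from hPs'.2) hzv
        (by omega) (by omega) with ⟨h1, h2⟩ | ⟨h1, h2⟩
    · omega
    · have hEzuv : EdgeLabel n G u v z :=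
        ⟨by omega, hvn, huv, by omega, hzv, Or.inr hnadjz⟩
      have hzx : ncRel n G z x :=
        Or.inr ⟨u, v, c, d, hEzuv, hE2, h1, h2, by omega⟩
      have := hcovx z hryz0 hzx
      omega
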